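/- arXiv:2005.12341 — 3 statements merged into one kernel-verified Lean document; each statement's English description precedes it below -/
import Mathlib

section
/- The class of all finite linear orders in the language {<} is not a weak multidimensional exact class for any set R of measuring functions: for the formula φ(x,y) := x < y, there is no finite partition Π of the set of pointed structures {(M, a) : M a finite linear order, a ∈ M} such that |φ(M, a)| depends only on the part of Π containing (M, a) and on M. -/
/-- A bundled finite linear order. -/
structure FinLinOrd where
  carrier : Type
  [lin : LinearOrder carrier]
  [fin : Finite carrier]

attribute [instance] FinLinOrd.lin FinLinOrd.fin

theorem Set.ncard_Iio_strictMono {α : Type*} [LinearOrder α] [Finite α] :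
    StrictMono fun a : α => (Set.Iio a).ncard :=
  fun _ _ hab => Set.ncard_lt_ncard (Set.Iio_ssubset_Iio hab)

/-- The class of all finite linear orders is not a weak multidimensional exact class for
any set of measuring functions: for the formula `φ(x, y) := x < y` there is no finite
partition of the pointed structures `(M, a)` such that `|φ(M, a)|` depends only on the
part containing `(M, a)` and on `M`. -/
theorem stmt_3 :
    ¬ ∃ (ι : Type) (_ : Finite ι)
        (part : (Σ M : FinLinOrd, M.carrier) → ι)
        (h : ι → FinLinOrd → ℕ),
        ∀ (M : FinLinOrd) (a : M.carrier),
          Nat.card {x : M.carrier | x < a} = h (part ⟨M, a⟩) M := by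
  rintro ⟨ι, _, part, h, hcard⟩
  let M : FinLinOrd := ⟨Fin (Nat.card ι + 1)⟩
  -- Within `M` the count `|{x | x < a}|` separates points, so the part must separate them too.
  have hinj : Function.Injective fun a : M.carrier => part ⟨M, a⟩ := by
    refine Function.Injective.of_comp (f := fun i => h i M) ?_
    convert (Set.ncard_Iio_strictMono (α := M.carrier)).injective using 2 with a
    exact (hcard M a).symm
  simpa [M] using Nat.card_le_card_of_injective _ hinj
end

section
/- Fix a prime p. The class {ℤ/pⁿℤ : n ≥ 1} of multiplicative monoids in the language {×} is not a weak multidimensional exact class for any R: for the formula φ(x, y) := ∃z (x = z × y), with parameter y = pⁱ in ℤ/pⁿℤ one has |φ(ℤ/pⁿℤ, pⁱ)| = p^{n−i}, and these sizes cannot be realized by finitely many measuring functions. -/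
lemma card_mult (p n i : ℕ) (hp : p.Prime) (hi : i ≤ n + 1) :
    Nat.card {x : ZMod (p ^ (n + 1)) | ∃ z, x = z * ((p ^ i : ℕ) : ZMod (p ^ (n + 1)))}
      = p ^ (n + 1 - i) := by
  have hp1 : 1 < p := hp.one_lt
  have hN : 0 < p ^ (n + 1) := pow_pos hp.pos _
  haveI : NeZero (p ^ (n + 1)) := ⟨hN.ne'⟩
  have hsplit : p ^ (n + 1 - i) * p ^ i = p ^ (n + 1) := by
    rw [← pow_add]; congr 1; omega
  set N := p ^ (n + 1) with hNdef
  set S := {x : ZMod N | ∃ z, x = z * ((p ^ i : ℕ) : ZMod N)} with hS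
  let F : Fin (p ^ (n + 1 - i)) → S := fun k =>
    ⟨(((k : ℕ) * p ^ i : ℕ) : ZMod N), ⟨((k : ℕ) : ZMod N), by push_cast; ring⟩⟩
  have hval : ∀ k : Fin (p ^ (n + 1 - i)), ((((k : ℕ) * p ^ i : ℕ) : ZMod N)).val
      = (k : ℕ) * p ^ i := by
    intro k
    rw [ZMod.val_natCast, Nat.mod_eq_of_lt]
    calc (k : ℕ) * p ^ i < p ^ (n + 1 - i) * p ^ i :=
          (Nat.mul_lt_mul_right (pow_pos hp.pos _)).mpr k.isLt
      _ = N := hsplit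
  have hinj : Function.Injective F := by
    intro k k' hkk
    have := congrArg (fun x : S => (x : ZMod N).val) hkk
    simp only [F, hval] at this
    exact Fin.ext (Nat.eq_of_mul_eq_mul_right (pow_pos hp.pos i) this)
  have hsurj : Function.Surjective F := by
    rintro ⟨x, z, rfl⟩
    set m := (z.val * p ^ i) % N with hm
    have hdvd : p ^ i ∣ m := by
      rw [hm]
      exact (Nat.dvd_mod_iff ⟨p ^ (n + 1 - i), by rw [← hsplit]; ring⟩).mpr ⟨z.val, by ring⟩
    have hmlt : m < N := Nat.mod_lt _ hN
    obtain ⟨k, hk⟩ := hdvd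
    have hklt : k < p ^ (n + 1 - i) := by
      by_contra hge
      push_neg at hge
      have : N ≤ m := by
        calc N = p ^ (n + 1 - i) * p ^ i := hsplit.symm
          _ ≤ k * p ^ i := Nat.mul_le_mul_right _ hge
          _ = m := by rw [hk, mul_comm]
      omega
    refine ⟨⟨k, hklt⟩, ?_⟩
    apply Subtype.ext
    show (((k * p ^ i : ℕ)) : ZMod N) = z * ((p ^ i : ℕ) : ZMod N)
    have : ((m : ℕ) : ZMod N) = z * ((p ^ i : ℕ) : ZMod N) := by
      rw [hm, ZMod.natCast_mod]
      push_cast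
      rw [ZMod.natCast_val, ZMod.cast_id]
    rw [← this, hk, mul_comm]
  have : Nat.card S = Nat.card (Fin (p ^ (n + 1 - i))) :=
    (Nat.card_congr (Equiv.ofBijective F ⟨hinj, hsurj⟩)).symm
  simpa using this

/-- Fix a prime `p`.  The class of multiplicative monoids `ℤ/pⁿℤ` (`n ≥ 1`) is not a
weak multidimensional exact class for any set of measuring functions: for the formula
`φ(x, y) := ∃z (x = z × y)` there is no finite partition of the pointed structures
`(ℤ/pⁿℤ, y)` such that the size of the set of multiples of `y` depends only on the part
containing the pointed structure and on the structure itself. -/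
theorem stmt_4 (p : ℕ) (hp : p.Prime) :
    ¬ ∃ (ι : Type) (_ : Finite ι)
        (part : (Σ n : ℕ, ZMod (p ^ (n + 1))) → ι)
        (h : ι → ℕ → ℕ),
        ∀ (n : ℕ) (y : ZMod (p ^ (n + 1))),
          Nat.card {x : ZMod (p ^ (n + 1)) | ∃ z, x = z * y} = h (part ⟨n, y⟩) n := by
  rintro ⟨ι, hfin, part, h, H⟩
  set n := Nat.card ι with hn
  set g : Fin (n + 2) → ι := fun i => part ⟨n, ((p ^ (i : ℕ) : ℕ) : ZMod (p ^ (n + 1)))⟩ with hg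
  have hginj : Function.Injective g := by
    intro i j hij
    have hi : (i : ℕ) ≤ n + 1 := by omega
    have hj : (j : ℕ) ≤ n + 1 := by omega
    have e1 := card_mult p n i hp hi
    have e2 := card_mult p n j hp hj
    rw [H n _] at e1 e2
    rw [show (part ⟨n, ((p ^ (i : ℕ) : ℕ) : ZMod (p ^ (n + 1)))⟩) = g i from rfl, hij] at e1
    have : p ^ (n + 1 - (i : ℕ)) = p ^ (n + 1 - (j : ℕ)) := by rw [← e1, ← e2]
    have := Nat.pow_right_injective hp.two_le this
    exact Fin.ext (by omega)
  have hle : Nat.card (Fin (n + 2)) ≤ Nat.card ι := Nat.card_le_card_of_injective g hginj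
  simp only [Nat.card_eq_fintype_card, Fintype.card_fin] at hle
  omega
end

section
/- Suppose the definition of an R-mec holds for a class C of finite L-structures for all formulas φ(x, y̅) with a single object variable x. Then C is an R′-mec in L for all formulas φ(x̅, y̅) with tuples x̅ of object variables, where R′ is the closure of R under pointwise addition and multiplication (Projection Lemma). In particular, if Γ is the partition for φ(x₁,…,x_{n−1}; x_n, y̅) with measuring functions f_i, and for each i the formula γ_i(x_n, y̅) defining the i-th class has partition π_{i1},…,π_{ir_i} with measuring functions g_{ij}, then on the common refinement π_{(j_1,…,j_k)} = ⋂_i π_{ij_i} the function h(M) = Σ_i f_i(M)·g_{ij_i}(M) satisfies h(M) = |φ(M^n, b̅)| for all (M, b̅) in that class. -/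
open FirstOrder Language

/-- A bundled structure for the language `L` (a member of a class of structures). -/
structure BStruc (L : FirstOrder.Language) where
  carrier : Type
  [str : L.Structure carrier]

attribute [instance] BStruc.str

/-- The closure of a set `S` of `ℕ`-valued functions under pointwise addition and
multiplication. -/
inductive GenRing {α : Type*} (S : Set (α → ℕ)) : (α → ℕ) → Prop
  | base {f} : f ∈ S → GenRing S f
  | add {f g} : GenRing S f → GenRing S g → GenRing S (f + g)
  | mul {f g} : GenRing S f → GenRing S g → GenRing S (f * g)

/-!
Induct on the number of object variables. Treat the last object variable `xₙ` of
`φ(x₀, …, xₙ; y̅)` as a parameter: by induction `φ(x₀, …, xₙ₋₁; xₙ, y̅)` has a measuring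
partition `ψᵢ(xₙ, y̅)` with functions `hᵢ`, and applying the hypothesis to each `ψᵢ(xₙ; y̅)`
gives partitions `πᵢⱼ(y̅)` with functions `gᵢⱼ`. Counting tuples fibrewise over the value
of `xₙ`, on the common refinement `⋀ᵢ πᵢⱼᵢ` the number of solutions of `φ` is
`∑ᵢ hᵢ · gᵢⱼᵢ`.
-/

theorem GenRing.sum {α ι : Type*} [Fintype ι] [Nonempty ι] {S : Set (α → ℕ)}
    {f : ι → α → ℕ} (hf : ∀ i, GenRing S (f i)) : GenRing S (∑ i, f i) :=
  Finset.univ_nonempty.cons_induction (motive := fun s _ => GenRing S (∑ i ∈ s, f i))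
    (fun i => by simpa using hf i)
    (fun i s hi _ ih => by rw [Finset.sum_cons]; exact .add (hf i) ih)

theorem existsUnique_pi {ι : Type*} {κ : ι → Type*} {p : ∀ i, κ i → Prop}
    (h : ∀ i, ∃! k, p i k) : ∃! j : ∀ i, κ i, ∀ i, p i (j i) := by
  choose j hj huniq using h
  exact ⟨j, hj, fun j' hj' => funext fun i => huniq i (j' i) (hj' i)⟩

open Finset in
theorem sum_eq_sum_mul_natCard_of_existsUnique {α ι : Type*} [Fintype α] [Fintype ι]
    {p : ι → α → Prop} (hp : ∀ b, ∃! i, p i b) {F : α → ℕ} {h : ι → ℕ}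
    (hF : ∀ b i, p i b → F b = h i) : ∑ b, F b = ∑ i, h i * Nat.card {b // p i b} := by
  classical
  choose cls hcls huniq using hp
  have hfiber : ∀ i, Nat.card {b // p i b} = #{b | cls b = i} := fun i => by
    rw [Nat.card_eq_fintype_card, Fintype.card_subtype]
    exact congrArg Finset.card (filter_congr fun b _ =>
      ⟨fun hb => (huniq b i hb).symm, fun hb => hb ▸ hcls b⟩)
  calc ∑ b, F b = ∑ b, h (cls b) := sum_congr rfl fun b _ => hF b _ (hcls b)
    _ = ∑ i, ∑ b with cls b = i, h (cls b) := (sum_fiberwise _ cls _).symm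
    _ = ∑ i, h i * Nat.card {b // p i b} := sum_congr rfl fun i _ => by
      rw [sum_congr rfl fun b hb => congrArg h (mem_filter.1 hb).2,
        sum_const, smul_eq_mul, hfiber, mul_comm]

theorem natCard_subtype_eq_sum_snoc {α : Type*} [Fintype α] {n : ℕ}
    (P : (Fin (n + 1) → α) → Prop) :
    Nat.card {c // P c} = ∑ b, Nat.card {c : Fin n → α // P (Fin.snoc c b)} := by
  rw [← Nat.card_sigma]
  exact Nat.card_congr (((Fin.snocEquiv fun _ => α).subtypeEquiv fun _ => Iff.rfl).symm.trans
    (Equiv.subtypeProdEquivSigmaSubtype fun b c => P (Fin.snoc c b)))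

theorem natCard_subtype_fin_one {α : Type*} (P : α → Prop) :
    Nat.card {c : Fin 1 → α // P (c 0)} = Nat.card {b // P b} :=
  Nat.card_congr ((Equiv.funUnique (Fin 1) α).subtypeEquiv fun _ => Iff.rfl)

def lastVarToParam (n m : ℕ) : Fin (n + 1) ⊕ Fin m → Fin n ⊕ Fin (m + 1) :=
  Sum.elim (Fin.lastCases (Sum.inr 0) Sum.inl) (Sum.inr ∘ Fin.succ)

theorem sum_elim_cons_comp_lastVarToParam {α : Type*} {n m : ℕ} (c : Fin n → α) (b : α)
    (a : Fin m → α) :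
    Sum.elim c (Fin.cons b a) ∘ lastVarToParam n m = Sum.elim (Fin.snoc c b) a := by
  funext x
  rcases x with k | j
  · induction k using Fin.lastCases <;> simp [lastVarToParam]
  · simp [lastVarToParam]

def firstParamToVar (m : ℕ) : Fin (m + 1) → Fin 1 ⊕ Fin m :=
  Fin.cons (Sum.inl 0) Sum.inr

theorem sum_elim_comp_firstParamToVar {α : Type*} {m : ℕ} (c : Fin 1 → α) (a : Fin m → α) :
    Sum.elim c a ∘ firstParamToVar m = Fin.cons (c 0) a := by
  funext x
  induction x using Fin.cases <;> simp [firstParamToVar]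

section Fibering

variable {L : Language} {M : Type*} [L.Structure M] {m : ℕ}

theorem natCard_realize_relabel_firstParamToVar (ψ : L.Formula (Fin (m + 1)))
    (a : Fin m → M) :
    Nat.card {c : Fin 1 → M | (ψ.relabel (firstParamToVar m)).Realize (Sum.elim c a)} =
      Nat.card {b // ψ.Realize (Fin.cons b a)} := by
  simp_rw [Set.coe_ofPred, Formula.realize_relabel, sum_elim_comp_firstParamToVar]
  exact natCard_subtype_fin_one fun b => ψ.Realize (Fin.cons b a)

theorem natCard_realize_eq_sum_mul [Fintype M] {n : ℕ} {ι : Type*} [Fintype ι]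
    (φ : L.Formula (Fin (n + 1) ⊕ Fin m)) (ψ : ι → L.Formula (Fin (m + 1))) (h : ι → ℕ)
    (a : Fin m → M) (hψ : ∀ b, ∃! i, (ψ i).Realize (Fin.cons b a))
    (hh : ∀ b i, (ψ i).Realize (Fin.cons b a) →
      Nat.card {c : Fin n → M |
        (φ.relabel (lastVarToParam n m)).Realize (Sum.elim c (Fin.cons b a))} = h i) :
    Nat.card {c : Fin (n + 1) → M | φ.Realize (Sum.elim c a)} =
      ∑ i, h i * Nat.card {c : Fin 1 → M |
        ((ψ i).relabel (firstParamToVar m)).Realize (Sum.elim c a)} := by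
  simp_rw [natCard_realize_relabel_firstParamToVar]
  rw [Set.coe_ofPred, natCard_subtype_eq_sum_snoc]
  refine sum_eq_sum_mul_natCard_of_existsUnique hψ fun b i hi => ?_
  rw [← hh b i hi]
  simp_rw [Set.coe_ofPred, Formula.realize_relabel, sum_elim_cons_comp_lastVarToParam]

end Fibering

section MeasuringPartition

variable {L : Language} {m : ℕ}

/-- The `S`-mec condition for the single formula `φ(x̅; y̅)`. -/
def HasMeasuringPartition (C : Set (BStruc L)) (S : Set (BStruc L → ℕ)) {n : ℕ}
    (φ : L.Formula (Fin n ⊕ Fin m)) : Prop :=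
  ∃ (ι : Type) (_ : Finite ι) (ψ : ι → L.Formula (Fin m)) (h : ι → BStruc L → ℕ),
    (∀ i, h i ∈ S) ∧
    ∀ M ∈ C, ∀ a : Fin m → M.carrier,
      (∃! i, (ψ i).Realize a) ∧
      ∀ i, (ψ i).Realize a →
        Nat.card {c : Fin n → M.carrier | φ.Realize (Sum.elim c a)} = h i M

variable {C : Set (BStruc L)}

theorem HasMeasuringPartition.mono {S T : Set (BStruc L → ℕ)} (hST : S ⊆ T) {n : ℕ}
    {φ : L.Formula (Fin n ⊕ Fin m)} : HasMeasuringPartition C S φ → HasMeasuringPartition C T φ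
  | ⟨ι, hι, ψ, h, hS, hpart⟩ => ⟨ι, hι, ψ, h, fun i => hST (hS i), hpart⟩

theorem HasMeasuringPartition.of_natCard_eq {S : Set (BStruc L → ℕ)} {n₁ n₂ : ℕ}
    {φ₁ : L.Formula (Fin n₁ ⊕ Fin m)} {φ₂ : L.Formula (Fin n₂ ⊕ Fin m)}
    (hcard : ∀ M ∈ C, ∀ a : Fin m → M.carrier,
      Nat.card {c : Fin n₁ → M.carrier | φ₁.Realize (Sum.elim c a)} =
        Nat.card {c : Fin n₂ → M.carrier | φ₂.Realize (Sum.elim c a)}) :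
    HasMeasuringPartition C S φ₁ → HasMeasuringPartition C S φ₂
  | ⟨ι, hι, ψ, h, hS, hpart⟩ => ⟨ι, hι, ψ, h, hS, fun M hM a =>
      ⟨(hpart M hM a).1, fun i hi => (hcard M hM a).symm.trans ((hpart M hM a).2 i hi)⟩⟩

variable {R : Set (BStruc L → ℕ)}

theorem HasMeasuringPartition.of_relabel_lastVarToParam (hC : ∀ M ∈ C, Finite M.carrier)
    (hbase : ∀ ψ : L.Formula (Fin 1 ⊕ Fin m), HasMeasuringPartition C R ψ) {n : ℕ}
    {φ : L.Formula (Fin (n + 1) ⊕ Fin m)}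
    (hφ : HasMeasuringPartition C {f | GenRing R f} (φ.relabel (lastVarToParam n m))) :
    HasMeasuringPartition C {f | GenRing R f} φ := by
  obtain ⟨ι, hι, ψ, h, hR, hpart⟩ := hφ
  rcases isEmpty_or_nonempty ι with hempty | hnonempty
  · -- every structure of `C` is empty, so all solution sets are empty, as for `⊥`
    have hC_empty : ∀ M ∈ C, IsEmpty M.carrier := fun M hM =>
      ⟨fun x => hempty.elim (hpart M hM fun _ => x).1.exists.choose⟩
    refine ((hbase ⊥).mono fun f => GenRing.base).of_natCard_eq fun M hM a => ?_
    have := hC_empty M hM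
    rw [Nat.card_of_isEmpty, Nat.card_of_isEmpty]
  have := Fintype.ofFinite ι
  choose κ hκ π g hgR hπ using fun i => hbase ((ψ i).relabel (firstParamToVar m))
  refine ⟨∀ i, κ i, inferInstance, fun j => Formula.iInf fun i => π i (j i),
    fun j => ∑ i, h i * g i (j i), fun j => GenRing.sum fun i => .mul (hR i) (.base (hgR i _)),
    fun M hM a => ?_⟩
  have := hC M hM
  have := Fintype.ofFinite M.carrier
  simp only [Formula.realize_iInf]
  refine ⟨existsUnique_pi fun i => (hπ i M hM a).1, fun j hj => ?_⟩
  rw [natCard_realize_eq_sum_mul φ ψ (h · M) a (fun b => (hpart M hM _).1)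
    (fun b => (hpart M hM _).2)]
  simp only [Finset.sum_apply, Pi.mul_apply, (hπ _ M hM a).2 _ (hj _)]

end MeasuringPartition

/-- Projection Lemma.  Suppose the definition of an `R`-mec holds for a class `C` of
finite `L`-structures for all formulas `φ(x, y̅)` with a single object variable: each
admits a finite definable partition of pointed structures with exact measuring
functions from `R`.  Then the same holds for every formula `φ(x̅, y̅)` with a nonempty
tuple of object variables, with measuring functions from the closure `R'` of `R` under
pointwise addition and multiplication. -/
theorem stmt_18 {L : FirstOrder.Language} (C : Set (BStruc L))
    (R : Set (BStruc L → ℕ)) (hC : ∀ M ∈ C, Finite M.carrier)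
    (hbase : ∀ (m : ℕ) (φ : L.Formula (Fin 1 ⊕ Fin m)),
      ∃ (ι : Type) (_ : Finite ι) (ψ : ι → L.Formula (Fin m))
        (h : ι → BStruc L → ℕ),
        (∀ i, h i ∈ R) ∧
        ∀ M ∈ C, ∀ a : Fin m → M.carrier,
          (∃! i, (ψ i).Realize a) ∧
          ∀ i, (ψ i).Realize a →
            Nat.card {c : Fin 1 → M.carrier | φ.Realize (Sum.elim c a)} = h i M) :
    ∀ (n m : ℕ) (φ : L.Formula (Fin (n + 1) ⊕ Fin m)),
      ∃ (ι : Type) (_ : Finite ι) (ψ : ι → L.Formula (Fin m))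
        (h : ι → BStruc L → ℕ),
        (∀ i, GenRing R (h i)) ∧
        ∀ M ∈ C, ∀ a : Fin m → M.carrier,
          (∃! i, (ψ i).Realize a) ∧
          ∀ i, (ψ i).Realize a →
            Nat.card {c : Fin (n + 1) → M.carrier | φ.Realize (Sum.elim c a)} =
              h i M := by
  intro n
  induction n with
  | zero => exact fun m φ => HasMeasuringPartition.mono (fun _ => GenRing.base) (hbase m φ)
  | succ n ih =>
    exact fun m φ => HasMeasuringPartition.of_relabel_lastVarToParam hC (hbase m) (ih _ _)
end
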